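/- Let 0 < ϰ < π/2 and Q_ϰ = {z ∈ ℂ : z ≠ 0, |arg z − π/2| ≥ ϰ, |arg z + π/2| ≥ ϰ}. Then there is C > 0 such that for all κ ∈ Q_ϰ with |κ| ≤ 1 and all l ≥ 1 with sinh(κl) ≠ 0, one has |κ e^{−κl} / sinh(κl)| ≤ C(|κ| + 1/l). -/

import Mathlib

/-!
Writing `w = 2κl`, one has `κ e^{-κl} / sinh(κl) = (1/l) P(w)` with `P(w) = w / (e^w - 1)`.
The sector condition gives `|Re w| ≥ sin ϰ · |w|`, and `|e^w - 1| ≥ 1 - e^{-|Re w|}` together with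
`t ≤ (1 - e^{-t})(1 + t)` yields `|P(w)| ≤ (1 + |w|) / sin ϰ`; dividing by `l` gives the bound.
-/

open Complex Real

theorem Real.sin_le_abs_cos_of_le_abs_sub_pi_div_two {ϰ θ : ℝ} (hϰ : 0 ≤ ϰ)
    (hθ₁ : -π < θ) (hθ₂ : θ ≤ π) (h₁ : ϰ ≤ |θ - π / 2|) (h₂ : ϰ ≤ |θ + π / 2|) :
    Real.sin ϰ ≤ |Real.cos θ| := by
  have hcos : Real.cos (π / 2 + ϰ) = -Real.sin ϰ := by rw [add_comm, Real.cos_add_pi_div_two]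
  rcases le_abs'.mp h₁ with hθ | hθ
  · rcases le_abs'.mp h₂ with hθ' | hθ'
    · have : Real.cos (-θ) ≤ Real.cos (π / 2 + ϰ) :=
        Real.cos_le_cos_of_nonneg_of_le_pi (by linarith) (by linarith) (by linarith)
      rw [Real.cos_neg, hcos] at this
      exact (le_neg.mp this).trans (neg_le_abs _)
    · have : Real.cos (π / 2 - ϰ) ≤ Real.cos |θ| :=
        Real.cos_le_cos_of_nonneg_of_le_pi (abs_nonneg θ) (by linarith)
          (abs_le.mpr ⟨by linarith, by linarith⟩)
      rw [Real.cos_pi_div_two_sub, Real.cos_abs] at this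
      exact this.trans (le_abs_self _)
  · have : Real.cos θ ≤ Real.cos (π / 2 + ϰ) :=
      Real.cos_le_cos_of_nonneg_of_le_pi (by linarith) hθ₂ (by linarith)
    rw [hcos] at this
    exact (le_neg.mp this).trans (neg_le_abs _)

theorem Real.le_one_sub_exp_neg_mul_one_add (t : ℝ) : t ≤ (1 - Real.exp (-t)) * (1 + t) := by
  have h : Real.exp (-t) * (1 + t) ≤ 1 :=
    calc Real.exp (-t) * (1 + t) ≤ Real.exp (-t) * Real.exp t :=
          mul_le_mul_of_nonneg_left (by linarith [Real.add_one_le_exp t]) (Real.exp_pos _).le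
      _ = 1 := by rw [← Real.exp_add, neg_add_cancel, Real.exp_zero]
  linarith

namespace Complex

theorem sin_mul_norm_le_abs_re {ϰ : ℝ} {κ : ℂ} (hϰ : 0 ≤ ϰ)
    (h₁ : ϰ ≤ |arg κ - π / 2|) (h₂ : ϰ ≤ |arg κ + π / 2|) :
    Real.sin ϰ * ‖κ‖ ≤ |κ.re| := by
  rw [← norm_mul_cos_arg, abs_mul, abs_norm, mul_comm]
  exact mul_le_mul_of_nonneg_left (Real.sin_le_abs_cos_of_le_abs_sub_pi_div_two hϰ
    (neg_pi_lt_arg κ) (arg_le_pi κ) h₁ h₂) (norm_nonneg κ)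

theorem exp_neg_div_sinh (z : ℂ) : exp (-z) / sinh z = 2 / (exp (2 * z) - 1) := by
  have h : exp (2 * z) - 1 = 2 * sinh z * exp z := by
    rw [two_sinh, sub_mul, ← exp_add, ← exp_add, neg_add_cancel, exp_zero, two_mul]
  rw [h, exp_neg]
  ring

theorem mul_exp_neg_div_sinh_mul_ofReal (κ : ℂ) {l : ℝ} (hl : l ≠ 0) :
    κ * exp (-(κ * l)) / sinh (κ * l) = (1 / l : ℂ) * (2 * κ * l / (exp (2 * κ * l) - 1)) := by
  rw [mul_div_assoc, exp_neg_div_sinh, ← mul_assoc]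
  field_simp [ofReal_ne_zero.mpr hl]

theorem one_sub_exp_neg_abs_re_le_norm_exp_sub_one (w : ℂ) :
    1 - Real.exp (-|w.re|) ≤ ‖exp w - 1‖ := by
  have hup : Real.exp w.re - 1 ≤ ‖exp w - 1‖ := by
    simpa [norm_exp] using norm_sub_norm_le (exp w) 1
  have hdown : 1 - Real.exp w.re ≤ ‖exp w - 1‖ := by
    simpa [norm_exp, norm_sub_rev] using norm_sub_norm_le 1 (exp w)
  rcases le_or_gt 0 w.re with hre | hre
  · rw [abs_of_nonneg hre]
    have : 2 ≤ Real.exp w.re + Real.exp (-w.re) := by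
      nlinarith [Real.add_one_le_exp w.re, Real.add_one_le_exp (-w.re)]
    linarith
  · rwa [abs_of_neg hre, neg_neg]

theorem abs_re_le_norm_exp_sub_one_mul (w : ℂ) :
    |w.re| ≤ ‖exp w - 1‖ * (1 + ‖w‖) :=
  calc |w.re| ≤ (1 - Real.exp (-|w.re|)) * (1 + |w.re|) := Real.le_one_sub_exp_neg_mul_one_add _
    _ ≤ ‖exp w - 1‖ * (1 + ‖w‖) :=
      mul_le_mul (one_sub_exp_neg_abs_re_le_norm_exp_sub_one w)
        (by linarith [abs_re_le_norm w]) (by positivity) (norm_nonneg _)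

theorem norm_div_exp_sub_one_le {δ : ℝ} {w : ℂ} (hδ : 0 < δ) (hw : δ * ‖w‖ ≤ |w.re|) :
    ‖w / (exp w - 1)‖ ≤ (1 + ‖w‖) / δ := by
  rcases (norm_nonneg (exp w - 1)).eq_or_lt with h | h
  · rw [norm_div, ← h, div_zero]
    positivity
  · rw [norm_div, div_le_div_iff₀ h hδ, mul_comm]
    exact hw.trans (by linarith [abs_re_le_norm_exp_sub_one_mul w])

theorem norm_mul_exp_neg_div_sinh_le {δ l : ℝ} {κ : ℂ} (hδ : 0 < δ) (hl : 0 < l)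
    (hκ : δ * ‖κ‖ ≤ |κ.re|) :
    ‖κ * exp (-(κ * l)) / sinh (κ * l)‖ ≤ (2 * ‖κ‖ + 1 / l) / δ := by
  have hnorm : ‖2 * κ * l‖ = 2 * l * ‖κ‖ := by
    rw [norm_mul, norm_mul, norm_real, Real.norm_eq_abs, abs_of_pos hl, Complex.norm_two]
    ring
  have hw : δ * ‖2 * κ * l‖ ≤ |(2 * κ * l).re| := by
    rw [hnorm, show 2 * κ * l = ((2 * l : ℝ) : ℂ) * κ by push_cast; ring, re_ofReal_mul,
      abs_mul, abs_of_pos (by positivity : 0 < 2 * l), mul_left_comm]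
    exact mul_le_mul_of_nonneg_left hκ (by positivity)
  calc ‖κ * exp (-(κ * l)) / sinh (κ * l)‖
      ≤ 1 / l * ((1 + ‖2 * κ * l‖) / δ) := by
        rw [mul_exp_neg_div_sinh_mul_ofReal κ hl.ne', norm_mul, norm_div, norm_one, norm_real,
          Real.norm_eq_abs, abs_of_pos hl]
        gcongr
        exact norm_div_exp_sub_one_le hδ hw
    _ = (2 * ‖κ‖ + 1 / l) / δ := by
        rw [hnorm]
        field_simp
        ring

end Complex

theorem kappa_exp_div_sinh_bound (ϰ : ℝ) (hϰ0 : 0 < ϰ) (hϰ : ϰ < π / 2) :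
    ∃ C > (0:ℝ), ∀ (κ : ℂ) (l : ℝ), κ ≠ 0 →
      ϰ ≤ |Complex.arg κ - π / 2| → ϰ ≤ |Complex.arg κ + π / 2| →
      ‖κ‖ ≤ 1 → 1 ≤ l → Complex.sinh (κ * l) ≠ 0 →
      ‖κ * Complex.exp (-(κ * l)) / Complex.sinh (κ * l)‖ ≤
        C * (‖κ‖ + 1 / l) := by
  have hδ : 0 < Real.sin ϰ := Real.sin_pos_of_pos_of_lt_pi hϰ0 (by linarith [Real.pi_pos])
  refine ⟨2 / Real.sin ϰ, by positivity, fun κ l _ h₁ h₂ _ hl _ => ?_⟩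
  have hl0 : 0 < l := by linarith
  calc ‖κ * exp (-(κ * l)) / sinh (κ * l)‖ ≤ (2 * ‖κ‖ + 1 / l) / Real.sin ϰ :=
        norm_mul_exp_neg_div_sinh_le hδ hl0 (sin_mul_norm_le_abs_re hϰ0.le h₁ h₂)
    _ ≤ 2 / Real.sin ϰ * (‖κ‖ + 1 / l) := by
        rw [div_mul_eq_mul_div]
        gcongr
        linarith [one_div_pos.mpr hl0]
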